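/- Let (X,d) be a metric space, f : X → X continuous, A ⊆ X a nonempty closed set with f(A) = A. Suppose there exist ε > 0 and β ∈ (0,1) such that d(f(x),A) ≤ β·d(x,A) whenever d(x,A) ≤ ε. Let U = {x : d(x,A) ≤ ε}. Then ⋂_{n≥0} fⁿ(U) = A. -/

import Mathlib

theorem stmt_3 {X : Type*} [MetricSpace X] (f : X → X) (hf : Continuous f)
    (A : Set X) (hAne : A.Nonempty) (hA : IsClosed A) (hfA : f '' A = A)
    (ε β : ℝ) (hε : 0 < ε) (hβ0 : 0 < β) (hβ1 : β < 1)
    (hcontr : ∀ x, Metric.infDist x A ≤ ε → Metric.infDist (f x) A ≤ β * Metric.infDist x A)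
    (U : Set X) (hU : U = {x | Metric.infDist x A ≤ ε}) :
    (⋂ n : ℕ, f^[n] '' U) = A := by
  have hAU : A ⊆ U := by
    intro a ha
    rw [hU]
    simp only [Set.mem_setOf_eq]
    rw [Metric.infDist_zero_of_mem ha]
    exact hε.le
  -- key: iterates of points in U
  have key : ∀ y, Metric.infDist y A ≤ ε → ∀ n : ℕ,
      Metric.infDist (f^[n] y) A ≤ β ^ n * Metric.infDist y A := by
    intro y hy n
    induction n with
    | zero => simp
    | succ k ih =>
      have hd0 : 0 ≤ Metric.infDist y A := Metric.infDist_nonneg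
      have hk : Metric.infDist (f^[k] y) A ≤ ε := by
        refine ih.trans (le_trans ?_ hy)
        calc β ^ k * Metric.infDist y A ≤ 1 * Metric.infDist y A := by
              apply mul_le_mul_of_nonneg_right _ hd0
              exact pow_le_one₀ hβ0.le hβ1.le
          _ = Metric.infDist y A := one_mul _
      rw [Function.iterate_succ_apply']
      calc Metric.infDist (f (f^[k] y)) A ≤ β * Metric.infDist (f^[k] y) A :=
            hcontr _ hk
        _ ≤ β * (β ^ k * Metric.infDist y A) := by
            exact mul_le_mul_of_nonneg_left ih hβ0.le
        _ = β ^ (k + 1) * Metric.infDist y A := by ring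
  apply le_antisymm
  · intro x hx
    have hdist : ∀ n : ℕ, Metric.infDist x A ≤ β ^ n * ε := by
      intro n
      have := Set.mem_iInter.mp hx n
      obtain ⟨y, hyU, hyx⟩ := this
      rw [hU] at hyU
      have := key y hyU n
      rw [hyx] at this
      refine this.trans ?_
      exact mul_le_mul_of_nonneg_left hyU (pow_nonneg hβ0.le n)
    have h0 : Metric.infDist x A ≤ 0 := by
      have htend : Filter.Tendsto (fun n : ℕ => β ^ n * ε) Filter.atTop (nhds 0) := by
        have := tendsto_pow_atTop_nhds_zero_of_lt_one hβ0.le hβ1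
        simpa using this.mul_const ε
      exact le_of_tendsto_of_tendsto' tendsto_const_nhds htend hdist
    have := Metric.infDist_nonneg (x := x) (s := A)
    have hz : Metric.infDist x A = 0 := le_antisymm h0 this
    rw [← hA.closure_eq]
    exact (Metric.mem_closure_iff_infDist_zero hAne).mpr hz
  · intro a ha
    refine Set.mem_iInter.mpr fun n => ?_
    have hAn : f^[n] '' A = A := by
      induction n with
      | zero => simp
      | succ k ih =>
        rw [Function.iterate_succ', Set.image_comp, ih, hfA]
    rw [← hAn] at ha
    exact Set.image_mono hAU ha
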